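/- arXiv:1705.07401 — 3 statements merged into one kernel-verified Lean document; each statement's English description precedes it below -/
import Mathlib

section
/- Let v1=(x1,y1) and v2=(x2,y2) be points in the open first quadrant with x1<y1, x2<y2, x1<x2, all of x1,x2,y1,y2 distinct. Then the intervals [x1,y1] and [x2,y2] are disjoint if and only if R(v1,v2) ∩ R(v1*,v2*) ≠ ∅, where v*=(y,x) denotes reflection in the line x=y. -/
/-- The closed axis-parallel rectangle with diagonal vertices `v` and `w`. -/
def rect (v w : ℝ × ℝ) : Set (ℝ × ℝ) :=
  Set.Icc (min v.1 w.1) (max v.1 w.1) ×ˢ Set.Icc (min v.2 w.2) (max v.2 w.2)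

/-!
Both rectangles have the same two projections, `[x1, x2]` and the interval between `y1` and `y2`
(in swapped order), so they meet iff these two intervals meet. As `x1 < x2 < y2`, that happens
iff `y1 ≤ x2`, while `[x1, y1]` and `[x2, y2]` are disjoint iff `y1 < x2`; the two conditions
agree because `y1 ≠ x2`.
-/

open Set

section LinearOrder

variable {α : Type*} [LinearOrder α] {x1 y1 x2 y2 : α}

theorem Set.Icc_inter_Icc_eq_empty_iff_lt (h12 : x1 ≤ x2) (h2 : x2 ≤ y2) :
    Icc x1 y1 ∩ Icc x2 y2 = ∅ ↔ y1 < x2 := by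
  rw [Icc_inter_Icc, Icc_eq_empty_iff, sup_eq_right.2 h12, le_inf_iff, not_and_or]
  simp [h2]

theorem Set.Icc_inter_uIcc_nonempty_iff_le (h12 : x1 ≤ x2) (h2 : x2 < y2) :
    (Icc x1 x2 ∩ uIcc y1 y2).Nonempty ↔ y1 ≤ x2 := by
  rw [uIcc, Icc_inter_Icc, nonempty_Icc, sup_le_iff, le_inf_iff, inf_le_iff]
  simp [h12, h2.not_ge, le_sup_of_le_right h2.le, h12.trans h2.le]

end LinearOrder

theorem rect_eq_uIcc_prod_uIcc (v w : ℝ × ℝ) : rect v w = uIcc v.1 w.1 ×ˢ uIcc v.2 w.2 := rfl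

theorem rect_inter_rect_swap_nonempty_iff (a b c d : ℝ) :
    (rect (a, b) (c, d) ∩ rect (b, a) (d, c)).Nonempty ↔ (uIcc a c ∩ uIcc b d).Nonempty := by
  rw [rect_eq_uIcc_prod_uIcc, rect_eq_uIcc_prod_uIcc, prod_inter_prod, prod_nonempty_iff,
    inter_comm (uIcc b d), and_self]

theorem stmt1_general (x1 y1 x2 y2 : ℝ)
    (h2' : x2 < y2) (h12 : x1 < x2)
    (hdist : List.Pairwise (· ≠ ·) [x1, x2, y1, y2]) :
    Set.Icc x1 y1 ∩ Set.Icc x2 y2 = ∅ ↔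
      (rect (x1, y1) (x2, y2) ∩ rect (y1, x1) (y2, x2)).Nonempty := by
  have hy1x2 : y1 ≠ x2 :=
    ((List.pairwise_cons.1 (List.pairwise_cons.1 hdist).2).1 y1 (by simp)).symm
  rw [Icc_inter_Icc_eq_empty_iff_lt h12.le h2'.le, rect_inter_rect_swap_nonempty_iff,
    uIcc_of_le h12.le, Icc_inter_uIcc_nonempty_iff_le h12.le h2', hy1x2.le_iff_lt]

theorem stmt1 (x1 y1 x2 y2 : ℝ)
    (h1 : 0 < x1) (h1' : x1 < y1) (h2 : 0 < x2) (h2' : x2 < y2) (h12 : x1 < x2)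
    (hdist : List.Pairwise (· ≠ ·) [x1, x2, y1, y2]) :
    Set.Icc x1 y1 ∩ Set.Icc x2 y2 = ∅ ↔
      (rect (x1, y1) (x2, y2) ∩ rect (y1, x1) (y2, x2)).Nonempty :=
  stmt1_general x1 y1 x2 y2 h2' h12 hdist
end

section
/- With the notation of the previous statement, for any sequence of rectangle transformations carrying V_0 to V_1 one has the lower bound ∑_{j=1}^k |Area(R_j)| ≥ |Area|(P), where |Area|(P)=∑_i |ω(A_i)| Area(A_i) is the absolute area of the oriented lattice polytope P determined by V_0 and V_1. -/
open MeasureTheory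

/-- The multiset of all x- and y-coordinates of a finite set of points in ℝ². -/
def coords (S : Finset (ℝ × ℝ)) : Multiset ℝ :=
  S.val.map Prod.fst + S.val.map Prod.snd

/-- The winding number around `p` of the lattice polytope whose horizontal edges
are the oriented segments from `q` to `h q` (`q ∈ V0`): a signed count of the
horizontal edges crossing the vertical ray going up from `p` (+1 for a leftward
edge, −1 for a rightward edge; counterclockwise winding is positive). -/
noncomputable def wind (V0 : Finset (ℝ × ℝ)) (h : ℝ × ℝ → ℝ × ℝ) (p : ℝ × ℝ) : ℤ :=
  ∑ q ∈ V0,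
    if p.2 < q.2 ∧ min q.1 (h q).1 < p.1 ∧ p.1 < max q.1 (h q).1 then
      (if (h q).1 < q.1 then 1 else -1)
    else 0

/-!
Away from the finitely many vertical lines through vertices, the winding number of `∂P` around
`p` is `N(V₀, p) - N(Vₖ, p)`, where `N(S, p)` counts the points of `S` strictly north-east of `p`:
each horizontal edge contributes the difference of the indicators of its two endpoints. A
rectangle transformation with corners `v, w` changes `N(·, p)` by
`(1[p.1 < v.1] - 1[p.1 < w.1]) * (1[p.2 < v.2] - 1[p.2 < w.2])`, which is bounded in absolute value
by the indicator of the rectangle. Telescoping along the sequence, `|ω| ≤ ∑ⱼ 1_{Rⱼ}` almost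
everywhere, and integrating gives the bound.
-/

open Set

section Coords

variable {S T : Finset (ℝ × ℝ)}

lemma injOn_fst_of_nodup_coords (hS : (coords S).Nodup) : InjOn Prod.fst (S : Set (ℝ × ℝ)) :=
  fun _ ha _ hb => Multiset.inj_on_of_nodup_map (Multiset.nodup_add.1 hS).1 _ ha _ hb

lemma injOn_snd_of_nodup_coords (hS : (coords S).Nodup) : InjOn Prod.snd (S : Set (ℝ × ℝ)) :=
  fun _ ha _ hb => Multiset.inj_on_of_nodup_map (Multiset.nodup_add.1 hS).2.1 _ ha _ hb

lemma fst_mem_coords {q : ℝ × ℝ} (hq : q ∈ S) : q.1 ∈ coords S :=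
  Multiset.mem_add.2 (Or.inl (Multiset.mem_map_of_mem _ hq))

lemma card_eq_of_coords_eq (h : coords S = coords T) : S.card = T.card := by
  have := congrArg Multiset.card h
  simp only [coords, Multiset.card_add, Multiset.card_map, Finset.card_val] at this
  omega

lemma coords_union_of_disjoint (h : Disjoint S T) : coords (S ∪ T) = coords S + coords T := by
  rw [← Finset.disjUnion_eq_union S T h]
  simp only [coords, Finset.disjUnion, Multiset.map_add]
  abel

lemma coords_pair {v w : ℝ × ℝ} (h : v ≠ w) :
    coords {v, w} = {v.1, w.1} + {v.2, w.2} := by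
  simp [coords, Finset.insert_val_of_notMem (Finset.notMem_singleton.2 h)]

end Coords

noncomputable def rectStep (S : Finset (ℝ × ℝ)) (v w : ℝ × ℝ) : Finset (ℝ × ℝ) :=
  (S \ {v, w}) ∪ {(w.1, v.2), (v.1, w.2)}

section RectStep

variable {S : Finset (ℝ × ℝ)} {v w : ℝ × ℝ}

lemma corner_notMem (hS : (coords S).Nodup) (hv : v ∈ S) (hw : w ∈ S) (hvw : v ≠ w) :
    (w.1, v.2) ∉ S := by
  intro ha
  have haw : (w.1, v.2) = w := injOn_fst_of_nodup_coords hS ha hw rfl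
  exact hvw (injOn_snd_of_nodup_coords hS hv hw (by rw [← haw]))

lemma fst_ne_of_nodup_coords (hS : (coords S).Nodup) (hv : v ∈ S) (hw : w ∈ S) (hvw : v ≠ w) :
    v.1 ≠ w.1 :=
  fun h => hvw (injOn_fst_of_nodup_coords hS hv hw h)

lemma disjoint_sdiff_corners (hS : (coords S).Nodup) (hv : v ∈ S) (hw : w ∈ S) (hvw : v ≠ w) :
    Disjoint (S \ {v, w}) {(w.1, v.2), (v.1, w.2)} := by
  rw [Finset.disjoint_insert_right, Finset.disjoint_singleton_right]
  exact ⟨fun h => corner_notMem hS hv hw hvw (Finset.mem_sdiff.1 h).1,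
    fun h => corner_notMem hS hw hv hvw.symm (Finset.mem_sdiff.1 h).1⟩

lemma pair_subset_of_mem (hv : v ∈ S) (hw : w ∈ S) : ({v, w} : Finset (ℝ × ℝ)) ⊆ S :=
  Finset.insert_subset hv (Finset.singleton_subset_iff.2 hw)

lemma coords_rectStep (hS : (coords S).Nodup) (hv : v ∈ S) (hw : w ∈ S) (hvw : v ≠ w) :
    coords (rectStep S v w) = coords S := by
  have hx := fst_ne_of_nodup_coords hS hv hw hvw
  conv_rhs => rw [← Finset.sdiff_union_of_subset (pair_subset_of_mem hv hw)]
  rw [rectStep, coords_union_of_disjoint (disjoint_sdiff_corners hS hv hw hvw),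
    coords_union_of_disjoint Finset.sdiff_disjoint, coords_pair hvw,
    coords_pair (v := (w.1, v.2)) (w := (v.1, w.2)) (fun h => hx (Prod.ext_iff.1 h).1.symm),
    Multiset.pair_comm w.1]

end RectStep

noncomputable def northEastInd (p q : ℝ × ℝ) : ℝ :=
  (Ioi p.1).indicator 1 q.1 * (Ioi p.2).indicator 1 q.2

noncomputable def northEastCount (S : Finset (ℝ × ℝ)) (p : ℝ × ℝ) : ℝ :=
  ∑ q ∈ S, northEastInd p q

/-- Away from the vertical lines through `v` and `w`, this is the winding number around `p` of the
boundary of the rectangle with horizontal edges from `v` to `(w.1, v.2)` and from `w` to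
`(v.1, w.2)`. -/
noncomputable def rectWind (v w p : ℝ × ℝ) : ℝ :=
  northEastInd p v + northEastInd p w - northEastInd p (w.1, v.2) - northEastInd p (v.1, w.2)

lemma rectWind_eq_mul (v w p : ℝ × ℝ) :
    rectWind v w p = ((Ioi p.1).indicator 1 v.1 - (Ioi p.1).indicator 1 w.1) *
      ((Ioi p.2).indicator 1 v.2 - (Ioi p.2).indicator 1 w.2) := by
  simp only [rectWind, northEastInd]
  ring

lemma abs_indicator_Ioi_sub_indicator_Ioi_le (x a b : ℝ) :
    |(Ioi x).indicator (1 : ℝ → ℝ) a - (Ioi x).indicator 1 b| ≤ (uIcc a b).indicator 1 x := by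
  by_cases hx : x ∈ uIcc a b
  · rw [indicator_of_mem hx]
    simp only [indicator_apply, mem_Ioi, Pi.one_apply]
    split_ifs <;> norm_num
  · have hab : x < a ↔ x < b := by
      rw [mem_uIcc] at hx
      constructor <;> intro <;> by_contra <;> grind
    simp [indicator_apply, hab, hx]

lemma abs_rectWind_le_indicator (v w p : ℝ × ℝ) :
    |rectWind v w p| ≤ (uIcc v.1 w.1 ×ˢ uIcc v.2 w.2).indicator 1 p := by
  rw [rectWind_eq_mul, abs_mul, ← Prod.mk.eta (p := p), indicator_prod_one]
  exact mul_le_mul (abs_indicator_Ioi_sub_indicator_Ioi_le _ _ _)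
    (abs_indicator_Ioi_sub_indicator_Ioi_le _ _ _) (abs_nonneg _)
    (indicator_nonneg (fun _ _ => zero_le_one) _)

lemma northEastCount_sub_northEastCount_rectStep {S : Finset (ℝ × ℝ)} {v w : ℝ × ℝ}
    (hS : (coords S).Nodup) (hv : v ∈ S) (hw : w ∈ S) (hvw : v ≠ w) (p : ℝ × ℝ) :
    northEastCount S p - northEastCount (rectStep S v w) p = rectWind v w p := by
  have hx := fst_ne_of_nodup_coords hS hv hw hvw
  rw [northEastCount, northEastCount, rectStep,
    Finset.sum_union (disjoint_sdiff_corners hS hv hw hvw),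
    Finset.sum_pair (a := (w.1, v.2)) (b := (v.1, w.2)) (fun h => hx (Prod.ext_iff.1 h).1.symm),
    ← Finset.sum_sdiff (pair_subset_of_mem hv hw), Finset.sum_pair hvw, rectWind]
  ring

lemma wind_eq_sum_northEastInd_sub {S : Finset (ℝ × ℝ)} {h : ℝ × ℝ → ℝ × ℝ} {p : ℝ × ℝ}
    (hp : ∀ q ∈ S, p.1 ≠ q.1 ∧ p.1 ≠ (h q).1) (hh : ∀ q ∈ S, (h q).2 = q.2) :
    (wind S h p : ℝ) = ∑ q ∈ S, (northEastInd p q - northEastInd p (h q)) := by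
  rw [wind, Int.cast_sum]
  refine Finset.sum_congr rfl fun q hq => ?_
  obtain ⟨hpq, hph⟩ := hp q hq
  simp only [northEastInd, hh q hq, indicator_apply, mem_Ioi, Pi.one_apply]
  rcases hpq.lt_or_gt with h1 | h1 <;> rcases hph.lt_or_gt with h2 | h2 <;>
    split_ifs <;> grind

lemma wind_eq_northEastCount_sub {S T : Finset (ℝ × ℝ)} {h : ℝ × ℝ → ℝ × ℝ}
    (hS : (coords S).Nodup) (hT : coords T = coords S) (hh : ∀ q ∈ S, h q ∈ T ∧ (h q).2 = q.2)
    {p : ℝ × ℝ} (hp : p.1 ∉ coords S) :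
    (wind S h p : ℝ) = northEastCount S p - northEastCount T p := by
  have hinj : InjOn h S := fun a ha b hb hab =>
    injOn_snd_of_nodup_coords hS ha hb (by rw [← (hh a ha).2, ← (hh b hb).2, hab])
  have himage : S.image h = T :=
    Finset.eq_of_subset_of_card_le (Finset.image_subset_iff.2 fun q hq => (hh q hq).1)
      (by rw [Finset.card_image_of_injOn hinj, card_eq_of_coords_eq hT])
  have hp' : ∀ q ∈ S, p.1 ≠ q.1 ∧ p.1 ≠ (h q).1 := fun q hq =>
    ⟨fun e => hp (e ▸ fst_mem_coords hq), fun e => hp (e ▸ hT ▸ fst_mem_coords (hh q hq).1)⟩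
  rw [wind_eq_sum_northEastInd_sub hp' fun q hq => (hh q hq).2, Finset.sum_sub_distrib,
    northEastCount, northEastCount, ← himage, Finset.sum_image hinj]

lemma Fin.sum_castSucc_sub_succ {M : Type*} [AddCommGroup M] {n : ℕ} (f : Fin (n + 1) → M) :
    ∑ i : Fin n, (f i.castSucc - f i.succ) = f 0 - f (Fin.last n) := by
  induction n with
  | zero => simp
  | succ n ih =>
    rw [Fin.sum_univ_castSucc]
    simp only [Fin.succ_castSucc]
    rw [ih (fun i => f i.castSucc)]
    simp

def IsRectStepSeq {k : ℕ} (V : Fin (k + 1) → Finset (ℝ × ℝ)) (vv ww : Fin k → ℝ × ℝ) : Prop :=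
  ∀ j : Fin k, vv j ∈ V j.castSucc ∧ ww j ∈ V j.castSucc ∧ vv j ≠ ww j ∧
    V j.succ = rectStep (V j.castSucc) (vv j) (ww j)

section RectStepSeq

variable {k : ℕ} {V : Fin (k + 1) → Finset (ℝ × ℝ)} {vv ww : Fin k → ℝ × ℝ}

lemma IsRectStepSeq.coords_eq (hV : IsRectStepSeq V vv ww) (hnodup : (coords (V 0)).Nodup)
    (j : Fin (k + 1)) : coords (V j) = coords (V 0) := by
  induction j using Fin.induction with
  | zero => rfl
  | succ j ih =>
    obtain ⟨hv, hw, hvw, hVj⟩ := hV j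
    rw [hVj, coords_rectStep (ih ▸ hnodup) hv hw hvw, ih]

lemma IsRectStepSeq.sum_rectWind (hV : IsRectStepSeq V vv ww) (hnodup : (coords (V 0)).Nodup)
    (p : ℝ × ℝ) :
    ∑ j, rectWind (vv j) (ww j) p = northEastCount (V 0) p - northEastCount (V (Fin.last k)) p := by
  rw [← Fin.sum_castSucc_sub_succ fun j => northEastCount (V j) p]
  refine Finset.sum_congr rfl fun j _ => ?_
  obtain ⟨hv, hw, hvw, hVj⟩ := hV j
  rw [hVj, northEastCount_sub_northEastCount_rectStep ((hV.coords_eq hnodup _).symm ▸ hnodup)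
    hv hw hvw]

end RectStepSeq

lemma measurableSet_rect (v w : ℝ × ℝ) : MeasurableSet (uIcc v.1 w.1 ×ˢ uIcc v.2 w.2) :=
  measurableSet_uIcc.prod measurableSet_uIcc

lemma integrable_indicator_rect (v w : ℝ × ℝ) :
    Integrable ((uIcc v.1 w.1 ×ˢ uIcc v.2 w.2).indicator (1 : ℝ × ℝ → ℝ)) :=
  (integrable_indicator_iff (measurableSet_rect v w)).2
    (integrableOn_const (isCompact_uIcc.prod isCompact_uIcc).measure_lt_top.ne)

lemma integral_indicator_rect (v w : ℝ × ℝ) :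
    ∫ p, (uIcc v.1 w.1 ×ˢ uIcc v.2 w.2).indicator (1 : ℝ × ℝ → ℝ) p
      = |w.1 - v.1| * |w.2 - v.2| := by
  rw [integral_indicator_one (measurableSet_rect v w), Measure.volume_eq_prod,
    measureReal_prod_prod, Real.volume_real_interval, Real.volume_real_interval]

lemma ae_fst_notMem (m : Multiset ℝ) : ∀ᵐ p : ℝ × ℝ, p.1 ∉ m := by
  have h : ∀ᵐ x : ℝ, x ∉ (m.toFinset : Set ℝ) := m.toFinset.countable_toSet.ae_notMem _
  rw [Measure.volume_eq_prod]
  simpa using Measure.quasiMeasurePreserving_fst.ae h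

lemma integral_abs_le_sum_area {ι : Type*} [Fintype ι] (v w : ι → ℝ × ℝ) {f : ℝ × ℝ → ℝ}
    (hf : ∀ᵐ p, f p = ∑ j, rectWind (v j) (w j) p) :
    ∫ p, |f p| ≤ ∑ j, |(w j).1 - (v j).1| * |(w j).2 - (v j).2| := by
  have hint : ∀ j ∈ Finset.univ, Integrable
      ((uIcc (v j).1 (w j).1 ×ˢ uIcc (v j).2 (w j).2).indicator (1 : ℝ × ℝ → ℝ)) :=
    fun j _ => integrable_indicator_rect _ _
  calc ∫ p, |f p|
      ≤ ∫ p, ∑ j, (uIcc (v j).1 (w j).1 ×ˢ uIcc (v j).2 (w j).2).indicator 1 p := by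
        refine integral_mono_of_nonneg (.of_forall fun p => abs_nonneg _)
          (integrable_finsetSum _ hint) (hf.mono fun p hp => ?_)
        dsimp only
        rw [hp]
        exact (Finset.abs_sum_le_sum_abs _ _).trans
          (Finset.sum_le_sum fun j _ => abs_rectWind_le_indicator _ _ _)
    _ = ∑ j, |(w j).1 - (v j).1| * |(w j).2 - (v j).2| := by
        rw [integral_finsetSum _ hint]
        exact Finset.sum_congr rfl fun j _ => integral_indicator_rect _ _

theorem stmt16 (k : ℕ) (V : Fin (k + 1) → Finset (ℝ × ℝ)) (vv ww : Fin k → ℝ × ℝ)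
    (hstep : ∀ j : Fin k, vv j ∈ V j.castSucc ∧ ww j ∈ V j.castSucc ∧ vv j ≠ ww j ∧
      V j.succ = (V j.castSucc \ {vv j, ww j}) ∪
        {((ww j).1, (vv j).2), ((vv j).1, (ww j).2)})
    (hnodup : (coords (V 0)).Nodup)
    (h : ℝ × ℝ → ℝ × ℝ)
    (hh : ∀ q ∈ V 0, h q ∈ V (Fin.last k) ∧ (h q).2 = q.2) :
    -- the total (unsigned) area of the rectangles is at least the absolute area
    -- `|Area|(P) = ∑ |ω(Aᵢ)|·Area(Aᵢ) = ∫ |ω|` of the lattice polytope `P` with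
    -- `Ver₀(P) = V 0` and `Ver₁(P) = V (Fin.last k)`.
    ∑ j : Fin k, |(ww j).1 - (vv j).1| * |(ww j).2 - (vv j).2|
      ≥ ∫ p : ℝ × ℝ, |((wind (V 0) h p : ℤ) : ℝ)| := by
  have hV : IsRectStepSeq V vv ww := hstep
  refine integral_abs_le_sum_area vv ww ?_
  filter_upwards [ae_fst_notMem (coords (V 0))] with p hp
  rw [wind_eq_northEastCount_sub hnodup (hV.coords_eq hnodup _) hh hp, hV.sum_rectWind hnodup]
end

section
/- There exists a lattice polytope P (explicitly constructible, e.g., the one in Figure 11 of the paper) such that every sequence of rectangle transformations R_1,…,R_k carrying Ver_0(P) to Ver_1(P) satisfies the strict inequality ∑_{j=1}^k |Area(R_j)| > |Area|(P); i.e., the lower bound by the absolute area of P is not always attained. -/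
open MeasureTheory

/-!
Let `neCount S p` count the points of `S` strictly north-east of `p`. A rectangle move on `v, w`
lowers it by `rectSign v w`, the signed indicator of the rectangle `R(v, w)`, so
`neCount V₀ - neCount V₁ = ∑ⱼ rectSign (vv j) (ww j)`. Moves preserve the multiset of coordinates,
so all corners stay on the integer lattice and a move costs at least the number of unit cells its
rectangle covers.

For the cross of Figure 11, `neCount V₀ - neCount V₁` is `±1` on the four arms of the cross (total
area `4 = |Area| P`) and `0` on the other five cells of the `3 × 3` block, but the first move, made
on two vertices of `V₀`, always covers one of those five cells. Hence every transformation costs at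
least `5`.
-/
section Counting

variable {α : Type*} [LinearOrder α]

def indLT (t c : α) : ℤ := if t < c then 1 else 0

def neCount (S : Finset (α × α)) (p : α × α) : ℤ :=
  ∑ q ∈ S, indLT p.1 q.1 * indLT p.2 q.2

/-- `±1` on the half-open rectangle spanned by `v` and `w`, `0` elsewhere. -/
def rectSign (v w p : α × α) : ℤ :=
  (indLT p.1 v.1 - indLT p.1 w.1) * (indLT p.2 v.2 - indLT p.2 w.2)

end Counting

noncomputable def rectMove (S : Finset (ℝ × ℝ)) (v w : ℝ × ℝ) : Finset (ℝ × ℝ) :=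
  S \ {v, w} ∪ {(w.1, v.2), (v.1, w.2)}

def IsRectMoveSeq {k : ℕ} (V : Fin (k + 1) → Finset (ℝ × ℝ)) (vv ww : Fin k → ℝ × ℝ) : Prop :=
  ∀ j : Fin k, vv j ∈ V j.castSucc ∧ ww j ∈ V j.castSucc ∧ vv j ≠ ww j ∧
    V j.succ = rectMove (V j.castSucc) (vv j) (ww j)

section RectMove

variable {S : Finset (ℝ × ℝ)} {v w : ℝ × ℝ}

lemma rectMove_val_add (hS : (coords S).Nodup) (hv : v ∈ S) (hw : w ∈ S) (hvw : v ≠ w) :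
    (rectMove S v w).val + {v, w} = S.val + {(w.1, v.2), (v.1, w.2)} := by
  obtain ⟨hfst, hsnd, -⟩ := Multiset.nodup_add.1 hS
  have hx : v.1 ≠ w.1 := fun h => hvw (Multiset.inj_on_of_nodup_map hfst _ hv _ hw h)
  have hc₁ : (w.1, v.2) ∉ S := fun h =>
    hx (Prod.ext_iff.1 (Multiset.inj_on_of_nodup_map hsnd v hv (w.1, v.2) h rfl)).1
  have hc₂ : (v.1, w.2) ∉ S := fun h =>
    hx (Prod.ext_iff.1 (Multiset.inj_on_of_nodup_map hsnd w hw (v.1, w.2) h rfl)).1.symm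
  have hdisj : Disjoint (S \ {v, w}) {(w.1, v.2), (v.1, w.2)} := by
    simp [Finset.disjoint_right, hc₁, hc₂]
  have hsplit : S = (S \ {v, w}).disjUnion {v, w} Finset.sdiff_disjoint := by
    rw [Finset.disjUnion_eq_union,
      Finset.sdiff_union_of_subset (by simp [Finset.insert_subset_iff, hv, hw])]
  have hpair : ∀ a b : ℝ × ℝ, a ≠ b → ({a, b} : Finset (ℝ × ℝ)).val = {a, b} := fun a b hab => by
    rw [Finset.insert_val_of_notMem (by simpa using hab)]; rfl
  have hnew : (rectMove S v w).val = (S \ {v, w}).val + {(w.1, v.2), (v.1, w.2)} := by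
    rw [rectMove, ← Finset.disjUnion_eq_union _ _ hdisj, Finset.disjUnion_val,
      hpair (w.1, v.2) (v.1, w.2) fun h => hx (Prod.ext_iff.1 h).1.symm]
  conv_rhs => rw [hsplit, Finset.disjUnion_val, hpair _ _ hvw]
  rw [hnew, add_right_comm]

lemma coords_rectMove (hS : (coords S).Nodup) (hv : v ∈ S) (hw : w ∈ S) (hvw : v ≠ w) :
    coords (rectMove S v w) = coords S := by
  have h := rectMove_val_add hS hv hw hvw
  have h₁ := congrArg (Multiset.map Prod.fst) (Multiset.pair_comm (w.1, v.2) _ ▸ h)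
  have h₂ := congrArg (Multiset.map Prod.snd) h
  simp only [Multiset.map_add, Multiset.insert_eq_cons, Multiset.map_cons,
    Multiset.map_singleton] at h₁ h₂
  unfold coords
  rw [add_right_cancel h₁, add_right_cancel h₂]

lemma neCount_rectMove (hS : (coords S).Nodup) (hv : v ∈ S) (hw : w ∈ S) (hvw : v ≠ w)
    (p : ℝ × ℝ) : neCount (rectMove S v w) p = neCount S p - rectSign v w p := by
  have h := congrArg (fun M => (M.map fun q => indLT p.1 q.1 * indLT p.2 q.2).sum)
    (rectMove_val_add hS hv hw hvw)
  simp only [Multiset.map_add, Multiset.sum_add, Multiset.insert_eq_cons, Multiset.map_cons,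
    Multiset.map_singleton, Multiset.sum_cons, Multiset.sum_singleton] at h
  simp only [neCount, Finset.sum_eq_multiset_sum, rectSign]
  linear_combination h

end RectMove

theorem Fin.sum_succ_sub_castSucc {G : Type*} [AddCommGroup G] {k : ℕ} (f : Fin (k + 1) → G) :
    ∑ j : Fin k, (f j.succ - f j.castSucc) = f (Fin.last k) - f 0 := by
  induction k with
  | zero => simp
  | succ k ih =>
    rw [Fin.sum_univ_castSucc, ← Fin.succ_last]
    have := ih (f ∘ Fin.castSucc)
    simp only [Function.comp_apply, Fin.succ_castSucc, Fin.castSucc_zero] at this ⊢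
    rw [this, Fin.succ_last]
    abel

namespace IsRectMoveSeq

variable {k : ℕ} {V : Fin (k + 1) → Finset (ℝ × ℝ)} {vv ww : Fin k → ℝ × ℝ}

lemma coords_eq (hV : IsRectMoveSeq V vv ww) (hS : (coords (V 0)).Nodup) (t : Fin (k + 1)) :
    coords (V t) = coords (V 0) := by
  induction t using Fin.induction with
  | zero => rfl
  | succ j ih =>
    obtain ⟨hv, hw, hvw, hV'⟩ := hV j
    rw [hV', coords_rectMove (ih ▸ hS) hv hw hvw, ih]

lemma neCount_sub_eq_sum_rectSign (hV : IsRectMoveSeq V vv ww) (hS : (coords (V 0)).Nodup)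
    (p : ℝ × ℝ) :
    neCount (V 0) p - neCount (V (Fin.last k)) p = ∑ j, rectSign (vv j) (ww j) p := by
  rw [← neg_sub, ← Fin.sum_succ_sub_castSucc (fun t => neCount (V t) p),
    ← Finset.sum_neg_distrib]
  refine Finset.sum_congr rfl fun j _ => ?_
  obtain ⟨hv, hw, hvw, hV'⟩ := hV j
  rw [hV', neCount_rectMove ((hV.coords_eq hS _).symm ▸ hS) hv hw hvw]
  ring

end IsRectMoveSeq

lemma sum_abs_indLT_sub_le (s : Finset ℤ) (a b : ℤ) :
    ∑ n ∈ s, |indLT n a - indLT n b| ≤ |a - b| := by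
  wlog hab : a ≤ b generalizing a b
  · simpa only [abs_sub_comm] using this b a (le_of_not_ge hab)
  have hterm : ∀ n, |indLT n a - indLT n b| = if n ∈ Finset.Ico a b then 1 else 0 := by
    intro n
    simp only [indLT, Finset.mem_Ico]
    split_ifs <;> simp_all <;> omega
  calc ∑ n ∈ s, |indLT n a - indLT n b|
      = ((s.filter (· ∈ Finset.Ico a b)).card : ℤ) := by simp only [hterm, Finset.sum_boole]
    _ ≤ (Finset.Ico a b).card := by
        exact_mod_cast Finset.card_le_card fun n hn => (Finset.mem_filter.1 hn).2
    _ = |a - b| := by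
        rw [Int.card_Ico, abs_sub_comm, abs_of_nonneg (sub_nonneg.2 hab),
          Int.toNat_of_nonneg (sub_nonneg.2 hab)]

lemma sum_abs_rectSign_le (s t : Finset ℤ) (a b : ℤ × ℤ) :
    ∑ c ∈ s ×ˢ t, |rectSign a b c| ≤ |a.1 - b.1| * |a.2 - b.2| := by
  simp only [rectSign, abs_mul, Finset.sum_product, ← Finset.sum_mul_sum]
  exact mul_le_mul (sum_abs_indLT_sub_le _ _ _) (sum_abs_indLT_sub_le _ _ _)
    (Finset.sum_nonneg fun _ _ => abs_nonneg _) (abs_nonneg _)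

def intPt : ℤ × ℤ ↪ ℝ × ℝ :=
  ⟨fun a => ((a.1 : ℝ), (a.2 : ℝ)), fun _ _ h => by simpa [Prod.ext_iff] using h⟩

@[simp]
lemma intPt_apply (a : ℤ × ℤ) : intPt a = ((a.1 : ℝ), (a.2 : ℝ)) := rfl

noncomputable def cellMid (c : ℤ × ℤ) : ℝ × ℝ := ((c.1 : ℝ) + 1 / 2, (c.2 : ℝ) + 1 / 2)

lemma indLT_add_half (n a : ℤ) : indLT ((n : ℝ) + 1 / 2) (a : ℝ) = indLT n a := by
  unfold indLT
  congr 1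
  apply propext
  constructor
  · intro h; exact_mod_cast (show (n : ℝ) < a by linarith)
  · intro h
    have : (n : ℝ) + 1 ≤ a := by exact_mod_cast h
    linarith

lemma rectSign_intPt_cellMid (a b c : ℤ × ℤ) :
    rectSign (intPt a) (intPt b) (cellMid c) = rectSign a b c := by
  simp only [rectSign, intPt_apply, cellMid, indLT_add_half]

lemma neCount_map_intPt_cellMid (S : Finset (ℤ × ℤ)) (c : ℤ × ℤ) :
    neCount (S.map intPt) (cellMid c) = neCount S c := by
  simp only [neCount, Finset.sum_map, intPt_apply, cellMid, indLT_add_half]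

lemma exists_intPt_eq {S : Finset (ℝ × ℝ)} (hS : ∀ x ∈ coords S, ∃ n : ℤ, (n : ℝ) = x)
    {q : ℝ × ℝ} (hq : q ∈ S) : ∃ a, intPt a = q := by
  obtain ⟨m, hm⟩ := hS q.1 (Multiset.mem_add.2 (Or.inl (Multiset.mem_map_of_mem _ hq)))
  obtain ⟨n, hn⟩ := hS q.2 (Multiset.mem_add.2 (Or.inr (Multiset.mem_map_of_mem _ hq)))
  exact ⟨(m, n), Prod.ext hm hn⟩

lemma sum_abs_rectSign_cellMid_le (s t : Finset ℤ) (a b : ℤ × ℤ) :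
    ((∑ c ∈ s ×ˢ t, |rectSign (intPt a) (intPt b) (cellMid c)| : ℤ) : ℝ)
      ≤ |(intPt b).1 - (intPt a).1| * |(intPt b).2 - (intPt a).2| := by
  simp only [rectSign_intPt_cellMid]
  simp only [intPt_apply]
  rw [abs_sub_comm (b.1 : ℝ), abs_sub_comm (b.2 : ℝ)]
  exact_mod_cast sum_abs_rectSign_le s t a b

lemma max_abs_sum_le_sum_abs {ι : Type*} {s : Finset ι} {i : ι} (hi : i ∈ s) (f : ι → ℤ) :
    max |∑ j ∈ s, f j| |f i| ≤ ∑ j ∈ s, |f j| :=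
  max_le (Finset.abs_sum_le_sum_abs _ _)
    (Finset.single_le_sum (f := fun j => |f j|) (fun _ _ => abs_nonneg _) hi)

/-- A cell `c` is covered at least `|∑ⱼ rectSign (vv j) (ww j) c|` times and at least as often as
by the rectangle of move `j₀`, while a move costs at least the number of cells it covers. -/
theorem IsRectMoveSeq.sum_cells_le_sum_area {k : ℕ} {V : Fin (k + 1) → Finset (ℝ × ℝ)}
    {vv ww : Fin k → ℝ × ℝ} (hV : IsRectMoveSeq V vv ww) (hS : (coords (V 0)).Nodup)
    (hZ : ∀ x ∈ coords (V 0), ∃ n : ℤ, (n : ℝ) = x) (s t : Finset ℤ) (j₀ : Fin k) :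
    ((∑ c ∈ s ×ˢ t, max |neCount (V 0) (cellMid c) - neCount (V (Fin.last k)) (cellMid c)|
        |rectSign (vv j₀) (ww j₀) (cellMid c)| : ℤ) : ℝ)
      ≤ ∑ j, |(ww j).1 - (vv j).1| * |(ww j).2 - (vv j).2| := by
  have hcell : ∀ j, ((∑ c ∈ s ×ˢ t, |rectSign (vv j) (ww j) (cellMid c)| : ℤ) : ℝ)
      ≤ |(ww j).1 - (vv j).1| * |(ww j).2 - (vv j).2| := by
    intro j
    obtain ⟨hv, hw, -⟩ := hV j
    rw [← hV.coords_eq hS] at hZ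
    obtain ⟨a, ha⟩ := exists_intPt_eq hZ hv
    obtain ⟨b, hb⟩ := exists_intPt_eq hZ hw
    rw [← ha, ← hb]
    exact sum_abs_rectSign_cellMid_le s t a b
  calc ((∑ c ∈ s ×ˢ t, max |neCount (V 0) (cellMid c) - neCount (V (Fin.last k)) (cellMid c)|
          |rectSign (vv j₀) (ww j₀) (cellMid c)| : ℤ) : ℝ)
      ≤ ((∑ c ∈ s ×ˢ t, ∑ j, |rectSign (vv j) (ww j) (cellMid c)| : ℤ) : ℝ) := by
        refine Int.cast_le.2 (Finset.sum_le_sum fun c _ => ?_)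
        rw [hV.neCount_sub_eq_sum_rectSign hS]
        exact max_abs_sum_le_sum_abs (Finset.mem_univ j₀) _
    _ = ∑ j, ((∑ c ∈ s ×ˢ t, |rectSign (vv j) (ww j) (cellMid c)| : ℤ) : ℝ) := by
        rw [Finset.sum_comm]; push_cast; rfl
    _ ≤ _ := Finset.sum_le_sum fun j _ => hcell j

lemma integral_abs_indicator_sub_indicator {X : Type*} [MeasurableSpace X] {μ : Measure X}
    {A B : Set X} (hA : MeasurableSet A) (hB : MeasurableSet B) (hμA : μ A ≠ ⊤) (hμB : μ B ≠ ⊤) :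
    ∫ x, |A.indicator 1 x - B.indicator 1 x| ∂μ = μ.real A + μ.real B - 2 * μ.real (A ∩ B) := by
  have hpt : ∀ x, |A.indicator (1 : X → ℝ) x - B.indicator 1 x| =
      A.indicator 1 x + B.indicator 1 x - 2 * (A ∩ B).indicator 1 x := by
    intro x
    by_cases hxA : x ∈ A <;> by_cases hxB : x ∈ B <;> norm_num [hxA, hxB]
  have hint : ∀ {C : Set X}, MeasurableSet C → μ C ≠ ⊤ → Integrable (C.indicator (1 : X → ℝ)) μ :=
    fun hC hμC => (integrable_indicator_iff hC).2 (integrableOn_const hμC)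
  have hA' := hint hA hμA
  have hB' := hint hB hμB
  have hAB := hint (hA.inter hB) (measure_ne_top_of_subset Set.inter_subset_left hμA)
  simp_rw [hpt]
  rw [integral_sub (f := fun x => A.indicator 1 x + B.indicator 1 x) (hA'.add hB')
      (hAB.const_mul 2), integral_add hA' hB', integral_const_mul, integral_indicator_one hA,
    integral_indicator_one hB, integral_indicator_one (hA.inter hB)]

lemma volume_real_Ioo_prod_Ico {a b c d : ℝ} (hab : a ≤ b) (hcd : c ≤ d) :
    volume.real (Set.Ioo a b ×ˢ Set.Ico c d) = (b - a) * (d - c) := by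
  rw [Measure.volume_eq_prod, measureReal_prod_prod, Real.volume_real_Ioo_of_le hab,
    Real.volume_real_Ico_of_le hcd]

lemma volume_Ioo_prod_Ico_ne_top (a b c d : ℝ) : volume (Set.Ioo a b ×ˢ Set.Ico c d) ≠ ⊤ := by
  simp [Measure.volume_eq_prod, Measure.prod_prod, ENNReal.mul_eq_top]

lemma coords_map_intPt (S : Finset (ℤ × ℤ)) :
    coords (S.map intPt) = (S.val.map Prod.fst + S.val.map Prod.snd).map Int.cast := by
  simp [coords, Multiset.map_map, Function.comp_def]

lemma exists_int_of_mem_coords_map_intPt (S : Finset (ℤ × ℤ)) :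
    ∀ x ∈ coords (S.map intPt), ∃ n : ℤ, (n : ℝ) = x := by
  simpa only [coords_map_intPt, Multiset.mem_map] using fun x hx => hx.imp fun _ h => h.2

/-- The polytope of Figure 11: the boundary of `[0,3] × [5,6]`, counterclockwise, together with
that of `[1,2] × [4,7]`, clockwise. The winding numbers cancel on the common square. -/
def crossZ0 : Finset (ℤ × ℤ) := {(0, 5), (1, 7), (2, 4), (3, 6)}

def crossZ1 : Finset (ℤ × ℤ) := {(0, 6), (1, 4), (2, 7), (3, 5)}

noncomputable def crossEdge (q : ℝ × ℝ) : ℝ × ℝ :=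
  if q.2 = 5 then (3, 5) else if q.2 = 7 then (2, 7) else if q.2 = 4 then (1, 4) else (0, 6)

lemma coords_cross_eq : coords (crossZ0.map intPt) = coords (crossZ1.map intPt) := by
  rw [coords_map_intPt, coords_map_intPt]
  congr 1
  decide

lemma coords_cross_nodup : (coords (crossZ0.map intPt)).Nodup := by
  rw [coords_map_intPt]
  exact Multiset.Nodup.map Int.cast_injective (by decide)

lemma crossEdge_spec :
    ∀ q ∈ crossZ0.map intPt, crossEdge q ∈ crossZ1.map intPt ∧ (crossEdge q).2 = q.2 := by
  simp only [Finset.mem_map, forall_exists_index, and_imp]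
  rintro _ a ha rfl
  simp only [crossZ0, Finset.mem_insert, Finset.mem_singleton] at ha
  rcases ha with rfl | rfl | rfl | rfl <;>
    norm_num [crossEdge, crossZ1, Prod.ext_iff, or_and_right, exists_or, and_assoc]

lemma wind_cross (p : ℝ × ℝ) :
    ((wind (crossZ0.map intPt) crossEdge p : ℤ) : ℝ) =
      (Set.Ioo 0 3 ×ˢ Set.Ico 5 6).indicator 1 p - (Set.Ioo 1 2 ×ˢ Set.Ico 4 7).indicator 1 p := by
  simp only [wind, Finset.sum_map, crossZ0]
  rw [Finset.sum_insert (by decide), Finset.sum_insert (by decide), Finset.sum_insert (by decide),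
    Finset.sum_singleton]
  norm_num [crossEdge]
  simp only [Set.indicator_apply, Set.mem_prod, Set.mem_Ioo, Set.mem_Ico, Pi.one_apply]
  split_ifs <;> grind

lemma cross_cells_bound : ∀ a ∈ crossZ0, ∀ b ∈ crossZ0, a ≠ b →
    5 ≤ ∑ c ∈ Finset.Ico 0 3 ×ˢ Finset.Ico 4 7,
      max |neCount crossZ0 c - neCount crossZ1 c| |rectSign a b c| := by
  decide

lemma integral_abs_wind_cross :
    ∫ p : ℝ × ℝ, |((wind (crossZ0.map intPt) crossEdge p : ℤ) : ℝ)| = 4 := by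
  have hinter : Set.Ioo (0 : ℝ) 3 ×ˢ Set.Ico (5 : ℝ) 6 ∩ Set.Ioo (1 : ℝ) 2 ×ˢ Set.Ico (4 : ℝ) 7
      = Set.Ioo 1 2 ×ˢ Set.Ico 5 6 := by
    rw [Set.prod_inter_prod, Set.Ioo_inter_Ioo, Set.Ico_inter_Ico]
    norm_num
  simp only [wind_cross]
  rw [integral_abs_indicator_sub_indicator (measurableSet_Ioo.prod measurableSet_Ico)
      (measurableSet_Ioo.prod measurableSet_Ico) (volume_Ioo_prod_Ico_ne_top _ _ _ _)
      (volume_Ioo_prod_Ico_ne_top _ _ _ _), hinter,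
    volume_real_Ioo_prod_Ico, volume_real_Ioo_prod_Ico, volume_real_Ioo_prod_Ico] <;> norm_num

theorem stmt19 :
    ∃ (V0 V1 : Finset (ℝ × ℝ)) (h : ℝ × ℝ → ℝ × ℝ),
      -- `V0, V1` are the initial and terminal vertices of a lattice polytope `P`:
      coords V0 = coords V1 ∧ (coords V0).Nodup ∧
      -- `h` matches each initial vertex with the terminal vertex of the
      -- horizontal edge of `P` through it,
      (∀ q ∈ V0, h q ∈ V1 ∧ (h q).2 = q.2) ∧
      -- and every sequence of rectangle transformations carrying `V0` to `V1`
      -- has total area strictly greater than `|Area|(P) = ∫ |ω|`.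
      ∀ (k : ℕ) (V : Fin (k + 1) → Finset (ℝ × ℝ)) (vv ww : Fin k → ℝ × ℝ),
        V 0 = V0 → V (Fin.last k) = V1 →
        (∀ j : Fin k, vv j ∈ V j.castSucc ∧ ww j ∈ V j.castSucc ∧ vv j ≠ ww j ∧
          V j.succ = (V j.castSucc \ {vv j, ww j}) ∪
            {((ww j).1, (vv j).2), ((vv j).1, (ww j).2)}) →
        ∑ j : Fin k, |(ww j).1 - (vv j).1| * |(ww j).2 - (vv j).2|
          > ∫ p : ℝ × ℝ, |((wind V0 h p : ℤ) : ℝ)| := by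
  refine ⟨crossZ0.map intPt, crossZ1.map intPt, crossEdge, coords_cross_eq, coords_cross_nodup,
    crossEdge_spec, ?_⟩
  rintro (_ | k) V vv ww h0 hlast hV
  · exact absurd (h0.symm.trans hlast) ((Finset.map_injective intPt).ne (by decide))
  obtain ⟨hv, hw, hvw, -⟩ := hV 0
  rw [Fin.castSucc_zero, h0] at hv hw
  obtain ⟨a, ha, hav⟩ := Finset.mem_map.1 hv
  obtain ⟨b, hb, hbw⟩ := Finset.mem_map.1 hw
  have hcells := IsRectMoveSeq.sum_cells_le_sum_area hV (h0 ▸ coords_cross_nodup)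
    (h0 ▸ exists_int_of_mem_coords_map_intPt crossZ0) (Finset.Ico 0 3) (Finset.Ico 4 7) 0
  simp only [h0, hlast, ← hav, ← hbw, neCount_map_intPt_cellMid, rectSign_intPt_cellMid] at hcells
  have h5 := cross_cells_bound a ha b hb (by rintro rfl; exact hvw (hav.symm.trans hbw))
  rw [integral_abs_wind_cross]
  calc (4 : ℝ) < 5 := by norm_num
    _ ≤ _ := le_trans (by exact_mod_cast h5) hcells
end
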